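/- Let 0 < q < p ≤ 1 and let n ≥ 2 be a natural number. Then for every x ∈ [0,1], B_{n,p,q}(t³;x) = (p^{2n-2}/[n]²_{p,q}) x + (p^{n-2}(2p+q) q [n-1]_{p,q}/[n]²_{p,q}) x² + (q³ [n-1]_{p,q} [n-2]_{p,q}/[n]²_{p,q}) x³. -/

import Mathlib

open Finset Set Filter Topology

/-- The (p,q)-integer `[n]_{p,q} = ∑_{i=0}^{n-1} p^(n-1-i) q^i`. -/
noncomputable def pqInt (p q : ℝ) (n : ℕ) : ℝ :=
  ∑ i ∈ Finset.range n, p ^ (n - 1 - i) * q ^ i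

/-- The (p,q)-factorial `[n]_{p,q}! = ∏_{j=1}^n [j]_{p,q}`. -/
noncomputable def pqFactorial (p q : ℝ) (n : ℕ) : ℝ :=
  ∏ j ∈ Finset.range n, pqInt p q (j + 1)

/-- The (p,q)-binomial coefficient. -/
noncomputable def pqChoose (p q : ℝ) (n k : ℕ) : ℝ :=
  pqFactorial p q n / (pqFactorial p q k * pqFactorial p q (n - k))

/-- The node `p^(n-k) [k]_{p,q} / [n]_{p,q}` of the (p,q)-Bernstein operator. -/
noncomputable def pqNode (p q : ℝ) (n k : ℕ) : ℝ :=
  p ^ (n - k) * pqInt p q k / pqInt p q n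

/-- The basis function
`p^((k(k-1)-n(n-1))/2) C(n,k)_{p,q} x^k ∏_{s=0}^{n-k-1} (p^s - q^s x)`,
where `p^((k(k-1)-n(n-1))/2)` is written as `p^(k(k-1)/2) / p^(n(n-1)/2)`. -/
noncomputable def pqBasis (p q : ℝ) (n k : ℕ) (x : ℝ) : ℝ :=
  (p ^ (k.choose 2) / p ^ (n.choose 2)) * pqChoose p q n k * x ^ k *
    ∏ s ∈ Finset.range (n - k), (p ^ s - q ^ s * x)

/-- The (p,q)-Bernstein operator `B_{n,p,q}(f;x)`. -/
noncomputable def pqBernstein (p q : ℝ) (n : ℕ) (f : ℝ → ℝ) (x : ℝ) : ℝ :=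
  ∑ k ∈ Finset.range (n + 1), pqBasis p q n k x * f (pqNode p q n k)

/-- The bivariate (p,q)-Bernstein operator
`B_{n,m}^{(p₁,q₁),(p₂,q₂)}(f;x,y)`. -/
noncomputable def pqBernstein2 (p₁ q₁ p₂ q₂ : ℝ) (n m : ℕ)
    (f : ℝ → ℝ → ℝ) (x y : ℝ) : ℝ :=
  ∑ k ∈ Finset.range (n + 1), ∑ j ∈ Finset.range (m + 1),
    pqBasis p₁ q₁ n k x * pqBasis p₂ q₂ m j y *
      f (pqNode p₁ q₁ n k) (pqNode p₂ q₂ m j)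

/-
A node absorbs one factor of the basis, `b_{n+1,k+1}(x) · p^(n-k) [k+1] / [n+1] = x · b_{n,k}(x)`,
and since `[k+1] = p^k + q [k]` the node of `B_{n+1}` at `k+1` is an affine function of the node
of `B_n` at `k`. Hence `B_{n+1}(t g(t)) = x · B_n(g((p^n + q [n] t) / [n+1]))`, which lowers the
degree of a monomial by one. Starting from the partition of unity `∑ₖ b_{n,k} = 1` (Pascal's rule
together with the substitution `x ↦ q x / p`), this gives the moments of `t`, `t²`, `t³` in turn.
-/

section

variable {p q : ℝ}

@[simp]
lemma pqInt_zero (p q : ℝ) : pqInt p q 0 = 0 := by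
  simp [pqInt]

lemma pqInt_succ (p q : ℝ) (n : ℕ) : pqInt p q (n + 1) = p ^ n + q * pqInt p q n := by
  rw [pqInt, pqInt, Finset.sum_range_succ', Finset.mul_sum, add_comm]
  simp only [Nat.add_sub_cancel, Nat.sub_zero, pow_zero, mul_one]
  congr 1
  refine Finset.sum_congr rfl fun i _ => ?_
  rw [show n - (i + 1) = n - 1 - i by omega]
  ring

lemma pqInt_add (p q : ℝ) (a b : ℕ) :
    pqInt p q (a + b) = p ^ a * pqInt p q b + q ^ b * pqInt p q a := by
  induction b with
  | zero => simp
  | succ b ih =>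
    rw [← add_assoc, pqInt_succ, ih, pqInt_succ, pow_add, pow_succ]
    ring

lemma pqInt_nonneg (hp : 0 < p) (hq : 0 ≤ q) (n : ℕ) : 0 ≤ pqInt p q n :=
  Finset.sum_nonneg fun _ _ => by positivity

lemma pqInt_pos (hp : 0 < p) (hq : 0 ≤ q) {n : ℕ} (hn : 0 < n) : 0 < pqInt p q n := by
  obtain ⟨m, rfl⟩ := Nat.exists_eq_add_of_lt hn
  rw [zero_add, pqInt_succ]
  have := pqInt_nonneg hp hq m
  positivity

lemma pqFactorial_pos (hp : 0 < p) (hq : 0 ≤ q) (n : ℕ) : 0 < pqFactorial p q n :=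
  Finset.prod_pos fun j _ => pqInt_pos hp hq j.succ_pos

@[simp]
lemma pqFactorial_zero (p q : ℝ) : pqFactorial p q 0 = 1 := by
  simp [pqFactorial]

lemma pqFactorial_succ (p q : ℝ) (n : ℕ) :
    pqFactorial p q (n + 1) = pqFactorial p q n * pqInt p q (n + 1) :=
  Finset.prod_range_succ _ _

lemma pqChoose_zero_right (hp : 0 < p) (hq : 0 ≤ q) (n : ℕ) : pqChoose p q n 0 = 1 := by
  have := (pqFactorial_pos hp hq n).ne'
  simp [pqChoose, this]

lemma pqChoose_self (hp : 0 < p) (hq : 0 ≤ q) (n : ℕ) : pqChoose p q n n = 1 := by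
  have := (pqFactorial_pos hp hq n).ne'
  simp [pqChoose, this]

lemma pqInt_succ_mul_pqChoose (hp : 0 < p) (hq : 0 ≤ q) {n k : ℕ} (hk : k ≤ n) :
    pqInt p q (n + 1) * pqChoose p q n k = pqChoose p q (n + 1) (k + 1) * pqInt p q (k + 1) := by
  rw [pqChoose, pqChoose, show n + 1 - (k + 1) = n - k by omega, pqFactorial_succ p q n,
    pqFactorial_succ p q k]
  have := (pqFactorial_pos hp hq n).ne'
  have := (pqFactorial_pos hp hq k).ne'
  have := (pqFactorial_pos hp hq (n - k)).ne'
  have := (pqInt_pos hp hq k.succ_pos).ne'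
  field_simp

lemma pqChoose_succ_succ (hp : 0 < p) (hq : 0 ≤ q) {n k : ℕ} (hk : k < n) :
    pqChoose p q (n + 1) (k + 1) =
      q ^ (k + 1) * pqChoose p q n (k + 1) + p ^ (n - k) * pqChoose p q n k := by
  obtain ⟨j, hj⟩ : ∃ j, n - k = j + 1 := ⟨n - k - 1, by omega⟩
  have hsplit : pqInt p q (n + 1) =
      p ^ (j + 1) * pqInt p q (k + 1) + q ^ (k + 1) * pqInt p q (j + 1) := by
    rw [← hj, ← pqInt_add, show n - k + (k + 1) = n + 1 by omega]
  rw [pqChoose, pqChoose, pqChoose, show n + 1 - (k + 1) = j + 1 by omega,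
    show n - (k + 1) = j by omega, hj, pqFactorial_succ p q n, pqFactorial_succ p q k,
    pqFactorial_succ p q j]
  have := (pqFactorial_pos hp hq n).ne'
  have := (pqFactorial_pos hp hq k).ne'
  have := (pqFactorial_pos hp hq j).ne'
  have := (pqInt_pos hp hq k.succ_pos).ne'
  have := (pqInt_pos hp hq j.succ_pos).ne'
  field_simp
  linear_combination hsplit

lemma Nat.succ_choose_two (k : ℕ) : (k + 1).choose 2 = k.choose 2 + k := by
  rw [Nat.choose_succ_succ', Nat.choose_one_right, add_comm]

lemma prod_range_succ_pow_sub_pow_mul (hp : p ≠ 0) (x : ℝ) (m : ℕ) :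
    ∏ s ∈ Finset.range (m + 1), (p ^ s - q ^ s * x) =
      (1 - x) * (p ^ m * ∏ s ∈ Finset.range m, (p ^ s - q ^ s * (q * x / p))) := by
  rw [Finset.prod_range_succ', pow_zero, pow_zero, one_mul, mul_comm]
  nth_rw 2 [← Finset.card_range m]
  rw [Finset.pow_card_mul_prod]
  congr 1
  refine Finset.prod_congr rfl fun s _ => ?_
  field_simp
  ring

lemma pqBasis_succ_zero (hp : 0 < p) (hq : 0 ≤ q) (n : ℕ) (x : ℝ) :
    pqBasis p q (n + 1) 0 x = (1 - x) * pqBasis p q n 0 (q * x / p) := by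
  simp only [pqBasis, pqChoose_zero_right hp hq, Nat.sub_zero,
    prod_range_succ_pow_sub_pow_mul hp.ne', Nat.succ_choose_two, pow_add]
  generalize ∏ s ∈ Finset.range n, (p ^ s - q ^ s * (q * x / p)) = P
  field_simp

lemma pqBasis_succ_self (hp : 0 < p) (hq : 0 ≤ q) (n : ℕ) (x : ℝ) :
    pqBasis p q (n + 1) (n + 1) x = x * pqBasis p q n n x := by
  simp only [pqBasis, pqChoose_self hp hq, Nat.sub_self, Finset.prod_range_zero, mul_one,
    Nat.succ_choose_two, pow_add, pow_succ]
  field_simp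

lemma pqBasis_succ_succ (hp : 0 < p) (hq : 0 ≤ q) {n k : ℕ} (hk : k < n) (x : ℝ) :
    pqBasis p q (n + 1) (k + 1) x =
      (1 - x) * pqBasis p q n (k + 1) (q * x / p) + x * pqBasis p q n k x := by
  obtain ⟨j, hj⟩ : ∃ j, n - k = j + 1 := ⟨n - k - 1, by omega⟩
  have hpow : p ^ n = p ^ (j + 1) * p ^ k := by rw [← pow_add]; congr 1; omega
  simp only [pqBasis, pqChoose_succ_succ hp hq hk, show n + 1 - (k + 1) = j + 1 by omega,
    show n - (k + 1) = j by omega, hj, prod_range_succ_pow_sub_pow_mul hp.ne',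
    Nat.succ_choose_two, pow_add, hpow, div_pow]
  generalize ∏ s ∈ Finset.range j, (p ^ s - q ^ s * (q * x / p)) = P
  field_simp
  ring

theorem sum_pqBasis (hp : 0 < p) (hq : 0 ≤ q) (n : ℕ) (x : ℝ) :
    ∑ k ∈ Finset.range (n + 1), pqBasis p q n k x = 1 := by
  induction n generalizing x with
  | zero => simp [pqBasis, pqChoose_self hp hq]
  | succ n ih =>
    calc ∑ k ∈ Finset.range (n + 2), pqBasis p q (n + 1) k x
        = (1 - x) * ∑ k ∈ Finset.range (n + 1), pqBasis p q n k (q * x / p) +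
            x * ∑ k ∈ Finset.range (n + 1), pqBasis p q n k x := by
          rw [Finset.sum_range_succ', Finset.sum_range_succ, Finset.sum_range_succ',
            Finset.sum_range_succ _ n, Finset.sum_congr rfl fun k hk =>
              pqBasis_succ_succ hp hq (Finset.mem_range.mp hk) x,
            pqBasis_succ_zero hp hq, pqBasis_succ_self hp hq, Finset.sum_add_distrib,
            ← Finset.mul_sum, ← Finset.mul_sum]
          ring
      _ = 1 := by rw [ih, ih]; ring

@[simp]
lemma pqNode_zero_right (p q : ℝ) (n : ℕ) : pqNode p q n 0 = 0 := by
  simp [pqNode]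

lemma pqNode_succ_succ (hp : 0 < p) (hq : 0 ≤ q) {n k : ℕ} (hk : k ≤ n) :
    pqNode p q (n + 1) (k + 1) =
      (p ^ n + q * pqInt p q n * pqNode p q n k) / pqInt p q (n + 1) := by
  have hpow : p ^ (n - k) * p ^ k = p ^ n := by rw [← pow_add]; congr 1; omega
  have hnode : pqInt p q n * pqNode p q n k = p ^ (n - k) * pqInt p q k := by
    rcases n.eq_zero_or_pos with rfl | hn
    · simp [Nat.le_zero.mp hk]
    · rw [pqNode, mul_div_cancel₀ _ (pqInt_pos hp hq hn).ne']
  rw [pqNode, show n + 1 - (k + 1) = n - k by omega, pqInt_succ, mul_assoc q, hnode]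
  linear_combination hpow / pqInt p q (n + 1)

lemma pqBasis_succ_succ_mul_pqNode (hp : 0 < p) (hq : 0 ≤ q) {n k : ℕ} (hk : k ≤ n) (x : ℝ) :
    pqBasis p q (n + 1) (k + 1) x * pqNode p q (n + 1) (k + 1) =
      x * pqBasis p q n k x := by
  have habsorb := pqInt_succ_mul_pqChoose hp hq hk
  have hpow : p ^ (n - k) * p ^ k = p ^ n := by rw [← pow_add]; congr 1; omega
  have := (pqInt_pos hp hq n.succ_pos).ne'
  simp only [pqBasis, pqNode, show n + 1 - (k + 1) = n - k by omega, Nat.succ_choose_two, pow_add]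
  generalize ∏ s ∈ Finset.range (n - k), (p ^ s - q ^ s * x) = P
  field_simp
  linear_combination x * x ^ k * P * (pqChoose p q (n + 1) (k + 1) * pqInt p q (k + 1) * hpow
    - p ^ n * habsorb)

lemma pqBernstein_add (p q : ℝ) (n : ℕ) (f g : ℝ → ℝ) (x : ℝ) :
    pqBernstein p q n (fun t => f t + g t) x = pqBernstein p q n f x + pqBernstein p q n g x := by
  simp only [pqBernstein, mul_add, Finset.sum_add_distrib]

lemma pqBernstein_const_mul (p q : ℝ) (n : ℕ) (c : ℝ) (f : ℝ → ℝ) (x : ℝ) :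
    pqBernstein p q n (fun t => c * f t) x = c * pqBernstein p q n f x := by
  simp only [pqBernstein, Finset.mul_sum]
  exact Finset.sum_congr rfl fun _ _ => by ring

lemma pqBernstein_const (hp : 0 < p) (hq : 0 ≤ q) (n : ℕ) (c x : ℝ) :
    pqBernstein p q n (fun _ => c) x = c := by
  rw [pqBernstein, ← Finset.sum_mul, sum_pqBasis hp hq, one_mul]

theorem pqBernstein_succ_mul (hp : 0 < p) (hq : 0 ≤ q) (n : ℕ) (g : ℝ → ℝ) (x : ℝ) :
    pqBernstein p q (n + 1) (fun t => t * g t) x =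
      x * pqBernstein p q n (fun t => g ((p ^ n + q * pqInt p q n * t) / pqInt p q (n + 1))) x := by
  rw [pqBernstein, pqBernstein, Finset.sum_range_succ', pqNode_zero_right, zero_mul, mul_zero,
    add_zero, Finset.mul_sum]
  refine Finset.sum_congr rfl fun k hk => ?_
  have hk : k ≤ n := Nat.lt_succ_iff.mp (Finset.mem_range.mp hk)
  rw [← mul_assoc, pqBasis_succ_succ_mul_pqNode hp hq hk, pqNode_succ_succ hp hq hk, mul_assoc]

lemma pqBernstein_id (hp : 0 < p) (hq : 0 ≤ q) (n : ℕ) (x : ℝ) :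
    pqBernstein p q (n + 1) (fun t => t) x = x := by
  simpa [pqBernstein_const hp hq] using pqBernstein_succ_mul hp hq n (fun _ => 1) x

lemma pqBernstein_sq (hp : 0 < p) (hq : 0 ≤ q) (n : ℕ) (x : ℝ) :
    pqBernstein p q (n + 1) (fun t => t ^ 2) x =
      (p ^ n * x + q * pqInt p q n * x ^ 2) / pqInt p q (n + 1) := by
  have hlin : pqInt p q n * pqBernstein p q n (fun t => t) x = pqInt p q n * x := by
    rcases n with _ | n
    · simp
    · rw [pqBernstein_id hp hq]
  have hfun : (fun t => (p ^ n + q * pqInt p q n * t) / pqInt p q (n + 1)) =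
      fun t => p ^ n / pqInt p q (n + 1) + q * pqInt p q n / pqInt p q (n + 1) * t := by
    funext t; ring
  rw [show (fun t : ℝ => t ^ 2) = fun t => t * t by funext t; ring, pqBernstein_succ_mul hp hq,
    hfun, pqBernstein_add, pqBernstein_const_mul, pqBernstein_const hp hq]
  linear_combination x * q / pqInt p q (n + 1) * hlin

end

theorem pqBernstein_moment_e3_general (p q : ℝ) (n : ℕ)
    (hq : 0 < q) (hqp : q < p) (hn : 2 ≤ n)
    (x : ℝ) :
    pqBernstein p q n (fun t => t ^ 3) x =
      (p ^ (2 * n - 2) / (pqInt p q n) ^ 2) * x +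
      (p ^ (n - 2) * (2 * p + q) * q * pqInt p q (n - 1) / (pqInt p q n) ^ 2) * x ^ 2 +
      (q ^ 3 * pqInt p q (n - 1) * pqInt p q (n - 2) / (pqInt p q n) ^ 2) * x ^ 3 := by
  have hp : 0 < p := hq.trans hqp
  obtain ⟨m, rfl⟩ : ∃ m, n = m + 1 + 1 := ⟨n - 2, by omega⟩
  set N := pqInt p q (m + 1 + 1)
  have hfun : (fun t => ((p ^ (m + 1) + q * pqInt p q (m + 1) * t) / N) ^ 2) =
      fun t => p ^ (2 * m + 2) / N ^ 2 + (2 * p ^ (m + 1) * q * pqInt p q (m + 1) / N ^ 2 * t +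
        q ^ 2 * pqInt p q (m + 1) ^ 2 / N ^ 2 * t ^ 2) := by
    funext t; ring
  have hN : N ≠ 0 := (pqInt_pos hp hq.le (by omega)).ne'
  rw [show (fun t : ℝ => t ^ 3) = fun t => t * t ^ 2 by funext t; ring,
    pqBernstein_succ_mul hp hq.le, hfun, pqBernstein_add, pqBernstein_add, pqBernstein_const_mul,
    pqBernstein_const_mul, pqBernstein_const hp hq.le, pqBernstein_id hp hq.le,
    pqBernstein_sq hp hq.le, show 2 * (m + 1 + 1) - 2 = 2 * m + 2 by omega,
    show m + 1 + 1 - 1 = m + 1 by omega, show m + 1 + 1 - 2 = m by omega]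
  field_simp
  ring

theorem pqBernstein_moment_e3 (p q : ℝ) (n : ℕ)
    (hq : 0 < q) (hqp : q < p) (hp : p ≤ 1) (hn : 2 ≤ n)
    (x : ℝ) (hx : x ∈ Set.Icc (0 : ℝ) 1) :
    pqBernstein p q n (fun t => t ^ 3) x =
      (p ^ (2 * n - 2) / (pqInt p q n) ^ 2) * x +
      (p ^ (n - 2) * (2 * p + q) * q * pqInt p q (n - 1) / (pqInt p q n) ^ 2) * x ^ 2 +
      (q ^ 3 * pqInt p q (n - 1) * pqInt p q (n - 2) / (pqInt p q n) ^ 2) * x ^ 3 :=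
  pqBernstein_moment_e3_general p q n hq hqp hn x
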